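/- Let p be a prime. For any n ∈ F_p, (φ(p−1)/(p−1)) · Σ_{χ mod p} (μ(ord(χ))/φ(ord(χ))) · χ(n) equals 1 if n is a primitive root modulo p and 0 otherwise, where the sum is over all Dirichlet characters modulo p. -/

import Mathlib

/-!
Write `q = p - 1`. Möbius inversion over the divisors of `q` gives
`[u generates] = ∑_{d ∣ q} μ(d) [u is a d-th power]`, and in the cyclic group `(ZMod p)ˣ` the
indicator of the `d`-th powers is `(1/d) ∑_{χ^d = 1} χ(u)`. Exchanging the two sums, the
coefficient of `χ` becomes `∑_{ord χ ∣ d ∣ q} μ(d)/d`, which an Euler product computation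
identifies with `(φ(q)/q) · μ(ord χ)/φ(ord χ)`.
-/

open Finset ArithmeticFunction
open scoped ArithmeticFunction.Moebius Nat

namespace Nat

theorem filter_dvd_divisors_mul {e : ℕ} (he : e ≠ 0) (M : ℕ) :
    {d ∈ (e * M).divisors | e ∣ d} = M.divisors.map ⟨(e * ·), mul_right_injective₀ he⟩ := by
  ext d
  simp only [mem_filter, mem_divisors, mem_map, Function.Embedding.coeFn_mk]
  constructor
  · rintro ⟨⟨hd, hM⟩, f, rfl⟩
    exact ⟨f, ⟨(mul_dvd_mul_iff_left he).mp hd, right_ne_zero_of_mul hM⟩, rfl⟩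
  · rintro ⟨f, ⟨hf, hM⟩, rfl⟩
    exact ⟨⟨mul_dvd_mul_left e hf, mul_ne_zero he hM⟩, dvd_mul_right e f⟩

theorem sum_moebius_filter_dvd_div {q m : ℕ} (hq : q ≠ 0) (hm : m ∣ q) :
    ∑ d ∈ q.divisors with m ∣ q / d, μ d = if m = q then 1 else 0 := by
  have hm0 : 0 < m := pos_of_dvd_of_pos hm (pos_of_ne_zero hq)
  have hdiv : {d ∈ q.divisors | m ∣ q / d} = (q / m).divisors := by
    ext d
    simp only [mem_filter, mem_divisors]
    constructor
    · rintro ⟨⟨hd, -⟩, hmd⟩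
      refine ⟨(Nat.dvd_div_iff_mul_dvd hm).mpr ?_,
        (Nat.div_pos (le_of_dvd (pos_of_ne_zero hq) hm) hm0).ne'⟩
      rw [mul_comm]
      exact (Nat.dvd_div_iff_mul_dvd hd).mp hmd
    · rintro ⟨hdm, -⟩
      have hmd : m * d ∣ q := (Nat.dvd_div_iff_mul_dvd hm).mp hdm
      have hd : d ∣ q := dvd_of_mul_left_dvd hmd
      refine ⟨⟨hd, hq⟩, (Nat.dvd_div_iff_mul_dvd hd).mpr ?_⟩
      rwa [mul_comm]
  rw [hdiv, ← coe_mul_zeta_apply, moebius_mul_coe_zeta, one_apply]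
  exact if_congr (by rw [Nat.div_eq_iff_eq_mul_left hm0 hm, one_mul, eq_comm]) rfl rfl

section Field

variable {K : Type*} [Field K] [CharZero K]

theorem cast_totient_eq_mul_prod (n : ℕ) :
    (φ n : K) = n * ∏ p ∈ n.primeFactors, (1 - (p : K)⁻¹) := by
  have h := congr(((↑) : ℚ → K) $(totient_eq_mul_prod_factors n))
  push_cast at h
  exact h

theorem prod_primeFactors_one_sub_inv_ne_zero (n : ℕ) :
    ∏ p ∈ n.primeFactors, (1 - (p : K)⁻¹) ≠ 0 :=
  prod_ne_zero_iff.mpr fun p hp => sub_ne_zero.mpr fun h =>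
    (prime_of_mem_primeFactors hp).one_lt.ne' (by exact_mod_cast inv_eq_one.mp h.symm)

theorem sum_divisors_moebius_div_of_squarefree {n : ℕ} (hn : Squarefree n) :
    ∑ d ∈ n.divisors, (μ d : K) / d = ∏ p ∈ n.primeFactors, (1 - (p : K)⁻¹) := by
  let inv : ArithmeticFunction K := ⟨fun d => (d : K)⁻¹, by simp⟩
  have hinv : inv.IsMultiplicative :=
    ⟨by simp [inv], fun {m n} _ => by simp [inv, mul_comm]⟩
  simpa [inv, div_eq_mul_inv] using (hinv.prodPrimeFactors_one_sub_of_squarefree _ hn).symm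

open UniqueFactorizationMonoid in
theorem sum_filter_dvd_moebius_div {q e : ℕ} (hq : q ≠ 0) (he : e ∣ q) :
    ∑ d ∈ q.divisors with e ∣ d, (μ d : K) / d
      = μ e / e * ∏ p ∈ q.primeFactors \ e.primeFactors, (1 - (p : K)⁻¹) := by
  by_cases hsf : Squarefree e
  swap
  · rw [moebius_eq_zero_of_not_squarefree hsf, sum_eq_zero fun d hd => ?_]
    · simp
    · rw [moebius_eq_zero_of_not_squarefree fun h => hsf (h.squarefree_of_dvd (mem_filter.mp hd).2)]
      simp
  have he0 : e ≠ 0 := ne_zero_of_dvd_ne_zero hq he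
  -- Only squarefree `d` contribute, so `q` may be replaced by its radical `e * r`.
  obtain ⟨r, hr⟩ : e ∣ radical q := (dvd_radical_iff hsf.isRadical hq).mpr he
  have hr_sf : Squarefree (e * r) := hr ▸ squarefree_radical
  have hr0 : r ≠ 0 := right_ne_zero_of_mul hr_sf.ne_zero
  have hcop : e.Coprime r := coprime_of_squarefree_mul hr_sf
  have hpf : q.primeFactors \ e.primeFactors = r.primeFactors := by
    rw [← primeFactors_radical q, hr, primeFactors_mul he0 hr0,
      union_sdiff_cancel_left hcop.disjoint_primeFactors]
  calc _ = ∑ d ∈ (e * r).divisors with e ∣ d, (μ d : K) / d := by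
        refine (sum_subset (filter_subset_filter _ (divisors_subset_of_dvd hq ?_))
          fun d hd hdr => ?_).symm
        · exact hr ▸ radical_dvd_self
        · have hdq := mem_filter.mp hd
          have hsd : ¬Squarefree d := fun hsd => hdr <| mem_filter.mpr
            ⟨mem_divisors.mpr ⟨hr ▸ (dvd_radical_iff hsd.isRadical hq).mpr
              (dvd_of_mem_divisors hdq.1), mul_ne_zero he0 hr0⟩, hdq.2⟩
          rw [moebius_eq_zero_of_not_squarefree hsd, Int.cast_zero, zero_div]
    _ = ∑ f ∈ r.divisors, (μ (e * f) : K) / (e * f : ℕ) := by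
        rw [filter_dvd_divisors_mul he0, sum_map]
        rfl
    _ = μ e / e * ∑ f ∈ r.divisors, (μ f : K) / f := by
        rw [mul_sum]
        refine sum_congr rfl fun f hf => ?_
        rw [isMultiplicative_moebius.map_mul_of_coprime
          (hcop.coprime_dvd_right (dvd_of_mem_divisors hf))]
        push_cast
        ring
    _ = _ := by rw [hpf, sum_divisors_moebius_div_of_squarefree hr_sf.of_mul_right]

theorem moebius_div_totient_eq_mul_sum {q e : ℕ} (hq : q ≠ 0) (he : e ∣ q) :
    (μ e : K) / φ e = q / φ q * ∑ d ∈ q.divisors with e ∣ d, (μ d : K) / d := by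
  have he0 : (e : K) ≠ 0 := cast_ne_zero.mpr (ne_zero_of_dvd_ne_zero hq he)
  have hq0 : (q : K) ≠ 0 := cast_ne_zero.mpr hq
  have hPe := prod_primeFactors_one_sub_inv_ne_zero (K := K) e
  have hPq := prod_primeFactors_one_sub_inv_ne_zero (K := K) q
  rw [sum_filter_dvd_moebius_div hq he, cast_totient_eq_mul_prod, cast_totient_eq_mul_prod,
    ← prod_sdiff (primeFactors_mono he hq)] at *
  generalize ∏ p ∈ q.primeFactors \ e.primeFactors, (1 - (p : K)⁻¹) = A at *
  generalize ∏ p ∈ e.primeFactors, (1 - (p : K)⁻¹) = B at *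
  have hA := left_ne_zero_of_mul hPq
  field_simp

end Field

end Nat

theorem IsCyclic.range_powMonoidHom_eq_ker {G : Type*} [CommGroup G] [IsCyclic G] [Finite G]
    {d : ℕ} (hd : d ∣ Nat.card G) :
    (powMonoidHom d : G →* G).range = (powMonoidHom (Nat.card G / d)).ker := by
  refine Subgroup.eq_of_le_of_card_ge ?_ ?_
  · rintro _ ⟨a, rfl⟩
    rw [MonoidHom.mem_ker, powMonoidHom_apply, powMonoidHom_apply, ← pow_mul,
      Nat.mul_div_cancel' hd, pow_card_eq_one']
  · rw [IsCyclic.card_powMonoidHom_ker, IsCyclic.card_powMonoidHom_range, Nat.gcd_eq_right hd,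
      Nat.gcd_eq_right (Nat.div_dvd_of_dvd hd)]

namespace MulChar

section Duality

variable {M R : Type*} [CommMonoid M] [Finite M] [CommRing R] [IsDomain R]
  [HasEnoughRootsOfUnity R (Monoid.exponent Mˣ)] [Fintype (MulChar M R)]

open scoped Classical in
theorem sum_filter_forall_mem_eq_one_apply (H : Subgroup Mˣ) (u : Mˣ) :
    ∑ χ : MulChar M R with ∀ m ∈ H, χ m = 1, χ u =
      if u ∈ H then (Nat.card (Mˣ ⧸ H) : R) else 0 := by
  set X := (subgroupOrderIsoSubgroupMulChar M R H).ofDual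
  have hX : ∀ χ, χ ∈ X ↔ ∀ m ∈ H, χ m = 1 := fun χ => mem_subgroupOrderIsoSubgroupMulChar_iff
  split_ifs with hu
  · have h1 : ∀ χ ∈ univ.filter fun χ : MulChar M R => ∀ m ∈ H, χ m = 1, χ u = 1 :=
      fun χ hχ => (mem_filter.mp hχ).2 u hu
    rw [sum_congr rfl h1, sum_const, nsmul_one,
      ← card_subgroupOrderIsoSubgroupMulChar (R := R), ← SetLike.coe_sort_coe,
      Nat.card_coe_set_eq, Set.ncard_eq_toFinset_card']
    congr 2
    ext χ
    simp
  · obtain ⟨χ₀, hχ₀X, hχ₀u⟩ : ∃ χ₀ ∈ X, χ₀ u ≠ 1 := by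
      by_contra! h
      have := (mem_subgroupOrderIsoSubgroupMulChar_symm_iff (X := X) (m := u)).mpr h
      rw [OrderDual.toDual_ofDual, OrderIso.symm_apply_apply] at this
      exact hu this
    refine eq_zero_of_mul_eq_self_left hχ₀u ?_
    simp only [sum_filter, mul_sum, mul_ite, mul_zero, ← hX]
    refine Fintype.sum_bijective (χ₀ * ·) (Group.mulLeft_bijective χ₀) _ _ fun χ => ?_
    simp only [mul_apply, X.mul_mem_cancel_left hχ₀X]

open scoped Classical in
theorem sum_filter_pow_eq_one_apply [IsCyclic Mˣ] {d : ℕ} (hd : d ∣ Nat.card Mˣ) (u : Mˣ) :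
    ∑ χ : MulChar M R with χ ^ d = 1, χ u =
      if orderOf u ∣ Nat.card Mˣ / d then (d : R) else 0 := by
  have hchar (χ : MulChar M R) :
      χ ^ d = 1 ↔ ∀ m ∈ (powMonoidHom d : Mˣ →* Mˣ).range, χ m = 1 := by
    refine ⟨?_, fun h => ext fun a => ?_⟩
    · rintro hχ _ ⟨a, rfl⟩
      rw [powMonoidHom_apply, Units.val_pow_eq_pow_val, map_pow, ← pow_apply_coe, hχ,
        one_apply_coe]
    · rw [pow_apply_coe, ← map_pow, ← Units.val_pow_eq_pow_val, one_apply_coe]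
      exact h _ ⟨a, rfl⟩
  rw [filter_congr fun χ _ => hchar χ, sum_filter_forall_mem_eq_one_apply, ← Subgroup.index,
    IsCyclic.index_powMonoidHom_range, Nat.gcd_eq_right hd, IsCyclic.range_powMonoidHom_eq_ker hd,
    MonoidHom.mem_ker, powMonoidHom_apply, ← orderOf_dvd_iff_pow_eq_one]
  congr

end Duality

variable {M K : Type*} [CommMonoid M] [Finite M] [IsCyclic Mˣ] [Field K] [CharZero K]
  [HasEnoughRootsOfUnity K (Monoid.exponent Mˣ)] [Fintype (MulChar M K)]

theorem sum_moebius_div_totient_orderOf_mul_apply (u : Mˣ) :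
    ∑ χ : MulChar M K, (μ (orderOf χ) : K) / φ (orderOf χ) * χ u
      = Nat.card Mˣ / φ (Nat.card Mˣ) * if orderOf u = Nat.card Mˣ then 1 else 0 := by
  classical
  have hχ (χ : MulChar M K) : orderOf χ ∣ Nat.card Mˣ :=
    card_eq_card_units_of_hasEnoughRootsOfUnity M K ▸ orderOf_dvd_natCard χ
  set q := Nat.card Mˣ
  have hq : q ≠ 0 := Nat.card_pos.ne'
  calc _ = q / φ q * ∑ d ∈ q.divisors, (μ d : K) / d * ∑ χ : MulChar M K with χ ^ d = 1, χ u := by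
        simp_rw [Nat.moebius_div_totient_eq_mul_sum hq (hχ _), mul_sum, sum_mul, sum_filter,
          orderOf_dvd_iff_pow_eq_one]
        rw [sum_comm]
        simp only [mul_assoc]
    _ = q / φ q * ∑ d ∈ q.divisors with orderOf u ∣ q / d, (μ d : K) := by
        rw [sum_filter]
        congr 1
        refine sum_congr rfl fun d hd => ?_
        rw [sum_filter_pow_eq_one_apply (Nat.dvd_of_mem_divisors hd)]
        split_ifs
        · exact div_mul_cancel₀ _ (Nat.cast_ne_zero.mpr (Nat.pos_of_mem_divisors hd).ne')
        · exact mul_zero _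
    _ = _ := by
        rw [← Int.cast_sum, Nat.sum_moebius_filter_dvd_div hq (orderOf_dvd_natCard u)]
        split_ifs <;> simp

end MulChar

open scoped Classical in
/-- For `p` prime and any `n ∈ F_p`, the weighted character sum
`(φ(p−1)/(p−1)) Σ_χ (μ(ord χ)/φ(ord χ)) χ(n)` is `1` if `n` is a primitive root mod `p`
and `0` otherwise. -/
theorem stmt_6 (p : ℕ) [Fact p.Prime] (n : ZMod p) :
    ((Nat.totient (p - 1) : ℂ) / ((p : ℂ) - 1)) *
      ∑ χ : DirichletCharacter ℂ p,
        ((ArithmeticFunction.moebius (orderOf χ) : ℂ) / (Nat.totient (orderOf χ) : ℂ)) * χ n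
    = if IsPrimitiveRoot n (p - 1) then 1 else 0 := by
  have hp : p.Prime := Fact.out
  have hq : p - 1 ≠ 0 := Nat.sub_ne_zero_of_lt hp.one_lt
  by_cases hn : IsUnit n
  · obtain ⟨u, rfl⟩ := hn
    have : NeZero (Monoid.exponent (ZMod p)ˣ) := ⟨Monoid.exponent_ne_zero_of_finite⟩
    have hφ : (φ (p - 1) : ℂ) ≠ 0 := Nat.cast_ne_zero.mpr (Nat.totient_pos.mpr (by omega)).ne'
    rw [MulChar.sum_moebius_div_totient_orderOf_mul_apply u, Nat.card_eq_fintype_card,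
      ZMod.card_units, IsPrimitiveRoot.coe_units_iff, IsPrimitiveRoot.iff_orderOf,
      ← Nat.cast_pred hp.pos]
    split_ifs
    · field_simp
    · simp
  · rw [if_neg fun h => hn (h.isUnit hq)]
    simp [MulChar.map_nonunit _ hn]
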